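/- arXiv:2409.08705 — 4 statements merged into one kernel-verified Lean document; each statement's English description precedes it below -/
import Mathlib

section
/- If φ₁ : V₁ → V₁ and φ₂ : V₂ → V₂ are linear operators on finite-dimensional vector spaces, then ker(φ₁ ⊗ φ₂) = ker(φ₁) ⊗ V₂ + V₁ ⊗ ker(φ₂), where the right-hand side is the sum of the corresponding subspaces of V₁ ⊗ V₂. -/
open scoped TensorProduct

open LinearMap

lemma range_rTensor_subtype_eq_span
    {K V₁ V₂ : Type*} [Field K] [AddCommGroup V₁] [Module K V₁] [AddCommGroup V₂] [Module K V₂]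
    (p : Submodule K V₁) :
    LinearMap.range (rTensor V₂ p.subtype)
      = Submodule.span K {x : V₁ ⊗[K] V₂ | ∃ u ∈ p, ∃ v : V₂, x = u ⊗ₜ[K] v} := by
  apply le_antisymm
  · rintro _ ⟨x, rfl⟩
    induction x using TensorProduct.induction_on with
    | zero => simp
    | tmul u v =>
      exact Submodule.subset_span ⟨u, u.2, v, rfl⟩
    | add x y hx hy => rw [map_add]; exact Submodule.add_mem _ hx hy
  · rw [Submodule.span_le]
    rintro _ ⟨u, hu, v, rfl⟩
    exact ⟨⟨u, hu⟩ ⊗ₜ v, rfl⟩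

lemma range_lTensor_subtype_eq_span
    {K V₁ V₂ : Type*} [Field K] [AddCommGroup V₁] [Module K V₁] [AddCommGroup V₂] [Module K V₂]
    (p : Submodule K V₂) :
    LinearMap.range (lTensor V₁ p.subtype)
      = Submodule.span K {x : V₁ ⊗[K] V₂ | ∃ u : V₁, ∃ v ∈ p, x = u ⊗ₜ[K] v} := by
  apply le_antisymm
  · rintro _ ⟨x, rfl⟩
    induction x using TensorProduct.induction_on with
    | zero => simp
    | tmul u v =>
      exact Submodule.subset_span ⟨u, v, v.2, rfl⟩
    | add x y hx hy => rw [map_add]; exact Submodule.add_mem _ hx hy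
  · rw [Submodule.span_le]
    rintro _ ⟨u, v, hv, rfl⟩
    exact ⟨u ⊗ₜ ⟨v, hv⟩, rfl⟩

theorem ker_tensorProduct_map
    {K V₁ V₂ : Type*} [Field K] [AddCommGroup V₁] [Module K V₁] [AddCommGroup V₂] [Module K V₂]
    [FiniteDimensional K V₁] [FiniteDimensional K V₂]
    (φ₁ : V₁ →ₗ[K] V₁) (φ₂ : V₂ →ₗ[K] V₂) :
    LinearMap.ker (TensorProduct.map φ₁ φ₂)
      = Submodule.span K
          {x : V₁ ⊗[K] V₂ | ∃ u ∈ LinearMap.ker φ₁, ∃ v : V₂, x = u ⊗ₜ[K] v}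
        ⊔ Submodule.span K
          {x : V₁ ⊗[K] V₂ | ∃ u : V₁, ∃ v ∈ LinearMap.ker φ₂, x = u ⊗ₜ[K] v} := by
  -- factor φᵢ through its range
  have hfac : TensorProduct.map φ₁ φ₂
      = (TensorProduct.map (LinearMap.range φ₁).subtype (LinearMap.range φ₂).subtype).comp
        (TensorProduct.map φ₁.rangeRestrict φ₂.rangeRestrict) := by
    rw [← TensorProduct.map_comp]
    congr 1
  have hinj : Function.Injective
      (TensorProduct.map (LinearMap.range φ₁).subtype (LinearMap.range φ₂).subtype) := by
    rw [← lTensor_comp_rTensor, coe_comp]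
    exact (Module.Flat.lTensor_preserves_injective_linearMap _
        (Submodule.injective_subtype _)).comp
      (Module.Flat.rTensor_preserves_injective_linearMap _ (Submodule.injective_subtype _))
  have hker : LinearMap.ker (TensorProduct.map φ₁ φ₂)
      = LinearMap.ker (TensorProduct.map φ₁.rangeRestrict φ₂.rangeRestrict) := by
    rw [hfac, ker_comp, ker_eq_bot_of_injective hinj, Submodule.comap_bot]
  have hexact1 : Function.Exact (LinearMap.ker φ₁).subtype φ₁.rangeRestrict := by
    rw [exact_iff, Submodule.range_subtype, ker_rangeRestrict]
  have hexact2 : Function.Exact (LinearMap.ker φ₂).subtype φ₂.rangeRestrict := by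
    rw [exact_iff, Submodule.range_subtype, ker_rangeRestrict]
  rw [hker, TensorProduct.map_ker hexact1 φ₁.surjective_rangeRestrict hexact2
    φ₂.surjective_rangeRestrict, range_rTensor_subtype_eq_span, range_lTensor_subtype_eq_span,
    sup_comm]
end

section
/- Let {V¹_j}_{j=1}^{ℓ₁} be subspaces of V₁ and {V²_j}_{j=1}^{ℓ₂} be subspaces of V₂. Then (⋂_j V¹_j) ⊗ (⋂_j V²_j) = ⋂_{(j₁,j₂)} (V¹_{j₁} ⊗ V²_{j₂}), where the intersections on the right are over all pairs (j₁, j₂) ∈ [ℓ₁] × [ℓ₂]. -/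
/-!
Inside `V₁ ⊗ V₂` one has `U ⊗ W = (U ⊗ V₂) ⊓ (V₁ ⊗ W)`, and `U ⊗ V₂` is the kernel of
`V₁ ⊗ V₂ → (V₁ ⧸ U) ⊗ V₂`. Since `⨅ j, U j` is the kernel of `V₁ → ∏ j, V₁ ⧸ U j`, flatness and
the commutation of `⊗` with finite products give `(⨅ j, U j) ⊗ V₂ = ⨅ j, U j ⊗ V₂`, and likewise
on the right; distributing the two intersections over `⊓` yields the theorem.
-/

open scoped TensorProduct

/-- The subspace of `V₁ ⊗ V₂` spanned by pure tensors with components in `U` and `W`. -/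
noncomputable def tensorSub {K V₁ V₂ : Type*} [Field K] [AddCommGroup V₁] [Module K V₁]
    [AddCommGroup V₂] [Module K V₂]
    (U : Submodule K V₁) (W : Submodule K V₂) : Submodule K (V₁ ⊗[K] V₂) :=
  Submodule.span K {x : V₁ ⊗[K] V₂ | ∃ u ∈ U, ∃ w ∈ W, x = u ⊗ₜ[K] w}

open LinearMap TensorProduct

section TensorSubmodule

variable {R M N : Type*} [CommRing R] [AddCommGroup M] [Module R M] [AddCommGroup N] [Module R N]

section Pi

variable {ι : Type*} [Fintype ι] [DecidableEq ι] {Q : ι → Type*} [∀ i, AddCommGroup (Q i)]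
  [∀ i, Module R (Q i)]

lemma LinearMap.ker_lTensor_pi (f : ∀ i, N →ₗ[R] Q i) :
    ker ((pi f).lTensor M) = ⨅ i, ker ((f i).lTensor M) := by
  have hpi : (piRight R R M Q).toLinearMap ∘ₗ (pi f).lTensor M = pi fun i ↦ (f i).lTensor M := by
    ext m n i
    simp
  rw [← ker_pi, ← hpi, LinearEquiv.ker_comp]

lemma LinearMap.ker_rTensor_pi (f : ∀ i, N →ₗ[R] Q i) :
    ker ((pi f).rTensor M) = ⨅ i, ker ((f i).rTensor M) := by
  have hpi : (piLeft R M Q).toLinearMap ∘ₗ (pi f).rTensor M = pi fun i ↦ (f i).rTensor M := by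
    ext n m i
    simp
  rw [← ker_pi, ← hpi, LinearEquiv.ker_comp]

end Pi

lemma Submodule.range_lTensor_subtype_eq_ker_mkQ (p : Submodule R N) :
    range (p.subtype.lTensor M) = ker (p.mkQ.lTensor M) :=
  (exact_iff.mp (lTensor_exact M (exact_subtype_mkQ p) p.mkQ_surjective)).symm

lemma Submodule.range_rTensor_subtype_eq_ker_mkQ (p : Submodule R N) :
    range (p.subtype.rTensor M) = ker (p.mkQ.rTensor M) :=
  (exact_iff.mp (rTensor_exact M (exact_subtype_mkQ p) p.mkQ_surjective)).symm

lemma Submodule.iInf_eq_ker_pi_mkQ {ι : Type*} (p : ι → Submodule R N) :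
    ⨅ i, p i = ker (LinearMap.pi fun i ↦ (p i).mkQ) := by
  simp [ker_pi]

section Flat

variable [Module.Flat R M]

lemma Module.Flat.ker_lTensor_eq_range_subtype {P : Type*} [AddCommGroup P] [Module R P]
    (f : N →ₗ[R] P) : ker (f.lTensor M) = range ((ker f).subtype.lTensor M) :=
  exact_iff.mp (lTensor_exact M (exact_subtype_ker_map f))

lemma Module.Flat.ker_rTensor_eq_range_subtype {P : Type*} [AddCommGroup P] [Module R P]
    (f : N →ₗ[R] P) : ker (f.rTensor M) = range ((ker f).subtype.rTensor M) :=
  exact_iff.mp (rTensor_exact M (exact_subtype_ker_map f))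

variable {ι : Type*} [Finite ι]

lemma Submodule.range_lTensor_subtype_iInf (p : ι → Submodule R N) :
    range ((⨅ i, p i).subtype.lTensor M) = ⨅ i, range ((p i).subtype.lTensor M) := by
  classical
  have := Fintype.ofFinite ι
  rw [iInf_eq_ker_pi_mkQ p, ← Module.Flat.ker_lTensor_eq_range_subtype, ker_lTensor_pi]
  simp_rw [range_lTensor_subtype_eq_ker_mkQ]

lemma Submodule.range_rTensor_subtype_iInf (p : ι → Submodule R N) :
    range ((⨅ i, p i).subtype.rTensor M) = ⨅ i, range ((p i).subtype.rTensor M) := by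
  classical
  have := Fintype.ofFinite ι
  rw [iInf_eq_ker_pi_mkQ p, ← Module.Flat.ker_rTensor_eq_range_subtype, ker_rTensor_pi]
  simp_rw [range_rTensor_subtype_eq_ker_mkQ]

end Flat

lemma TensorProduct.range_mapIncl_eq_inf (p : Submodule R M) (q : Submodule R N)
    [Module.Flat R (N ⧸ q)] :
    range (mapIncl p q) = range (p.subtype.rTensor N) ⊓ range (q.subtype.lTensor M) := by
  have hr : mapIncl p q = p.subtype.rTensor N ∘ₗ q.subtype.lTensor p := by
    rw [mapIncl, ← rTensor_comp_lTensor]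
  have hl : mapIncl p q = q.subtype.lTensor M ∘ₗ p.subtype.rTensor q := by
    rw [mapIncl, ← lTensor_comp_rTensor]
  refine le_antisymm (le_inf (hr ▸ range_comp_le_range _ _) (hl ▸ range_comp_le_range _ _)) ?_
  rintro _ ⟨⟨y, rfl⟩, hy⟩
  -- tensoring with the flat module `N ⧸ q` keeps `p → M` injective, so `y` already dies in
  -- `p ⊗ (N ⧸ q)`
  rw [SetLike.mem_coe, Submodule.range_lTensor_subtype_eq_ker_mkQ, mem_ker, ← comp_apply,
    lTensor_comp_rTensor, ← rTensor_comp_lTensor, comp_apply] at hy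
  have hinj := Module.Flat.rTensor_preserves_injective_linearMap (M := N ⧸ q) _
    p.injective_subtype
  obtain ⟨z, rfl⟩ : y ∈ range (q.subtype.lTensor p) := by
    rw [Submodule.range_lTensor_subtype_eq_ker_mkQ]
    exact (injective_iff_map_eq_zero _).mp hinj _ hy
  exact ⟨z, by rw [hr, comp_apply]⟩

end TensorSubmodule

lemma tensorSub_eq_range_mapIncl {K V₁ V₂ : Type*} [Field K] [AddCommGroup V₁] [Module K V₁]
    [AddCommGroup V₂] [Module K V₂] (U : Submodule K V₁) (W : Submodule K V₂) :
    tensorSub U W = range (mapIncl U W) := by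
  rw [range_mapIncl, Submodule.map₂_eq_span_image2, tensorSub]
  congr 1
  ext x
  simp [Set.mem_image2, eq_comm]

theorem tensor_of_iInf_eq_iInf_tensor_general
    {K V₁ V₂ : Type*} [Field K] [AddCommGroup V₁] [Module K V₁] [AddCommGroup V₂] [Module K V₂]
    {ℓ₁ ℓ₂ : ℕ} (hℓ₁ : 0 < ℓ₁) (hℓ₂ : 0 < ℓ₂)
    (U : Fin ℓ₁ → Submodule K V₁) (W : Fin ℓ₂ → Submodule K V₂) :
    tensorSub (⨅ j, U j) (⨅ j, W j)
      = ⨅ p : Fin ℓ₁ × Fin ℓ₂, tensorSub (U p.1) (W p.2) := by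
  have : Nonempty (Fin ℓ₁) := ⟨⟨0, hℓ₁⟩⟩
  have : Nonempty (Fin ℓ₂) := ⟨⟨0, hℓ₂⟩⟩
  simp only [tensorSub_eq_range_mapIncl, range_mapIncl_eq_inf,
    Submodule.range_rTensor_subtype_iInf, Submodule.range_lTensor_subtype_iInf, iInf_prod]
  rw [iInf_inf]
  simp only [inf_iInf]

theorem tensor_of_iInf_eq_iInf_tensor
    {K V₁ V₂ : Type*} [Field K] [AddCommGroup V₁] [Module K V₁] [AddCommGroup V₂] [Module K V₂]
    [FiniteDimensional K V₁] [FiniteDimensional K V₂]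
    {ℓ₁ ℓ₂ : ℕ} (hℓ₁ : 0 < ℓ₁) (hℓ₂ : 0 < ℓ₂)
    (U : Fin ℓ₁ → Submodule K V₁) (W : Fin ℓ₂ → Submodule K V₂) :
    tensorSub (⨅ j, U j) (⨅ j, W j)
      = ⨅ p : Fin ℓ₁ × Fin ℓ₂, tensorSub (U p.1) (W p.2) :=
  tensor_of_iInf_eq_iInf_tensor_general hℓ₁ hℓ₂ U W
end

section
/- Let {(η¹_x, ρ¹_x)}_{x∈[ℓ₁]} and {(η²_y, ρ²_y)}_{y∈[ℓ₂]} be two ensembles of density operators on finite-dimensional Hilbert spaces H₁, H₂, and let {M¹_x}, {M²_y} be POVMs satisfying the Holevo–Yuen–Kennedy–Lax optimality conditions ∑_x η¹_x ρ¹_x M¹_x ⪰ η¹_{x'} ρ¹_{x'} for all x' and ∑_y η²_y ρ²_y M²_y ⪰ η²_{y'} ρ²_{y'} for all y'. Then the product POVM {M¹_x ⊗ M²_y} satisfies the Holevo–Yuen–Kennedy–Lax optimality condition for the product ensemble {(η¹_x η²_y, ρ¹_x ⊗ ρ²_y)}: ∑_{x,y} η¹_x η²_y (ρ¹_x ⊗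 ρ²_y)(M¹_x ⊗ M²_y) ⪰ η¹_{x'} η²_{y'} ρ¹_{x'} ⊗ ρ²_{y'} for all (x', y'). -/
open Matrix Kronecker ComplexOrder

/-!
The optimal-measurement operator of the product ensemble is the Kronecker product `S₁ ⊗ₖ S₂` of
the two factors' operators `Sᵢ = ∑ ηᵢ ρᵢ Mᵢ`. The Loewner order is compatible with `⊗ₖ` on
positive semidefinite matrices, because `A ⊗ₖ B - a ⊗ₖ b = (A - a) ⊗ₖ B + a ⊗ₖ (B - b)` and Kronecker
products of positive semidefinite matrices are positive semidefinite; so `S₁ ⪰ η₁ ρ₁` and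
`S₂ ⪰ η₂ ρ₂` give `S₁ ⊗ₖ S₂ ⪰ η₁ η₂ ρ₁ ⊗ₖ ρ₂`.
-/

namespace Matrix

theorem sum_kronecker_sum {l m n p ι κ α : Type*} [NonUnitalNonAssocSemiring α]
    (s : Finset ι) (t : Finset κ) (A : ι → Matrix l m α) (B : κ → Matrix n p α) :
    (∑ i ∈ s, A i) ⊗ₖ (∑ j ∈ t, B j) = ∑ i ∈ s, ∑ j ∈ t, A i ⊗ₖ B j := by
  ext ⟨i₁, i₂⟩ ⟨j₁, j₂⟩
  simp [Matrix.sum_apply, Finset.sum_mul_sum]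

variable {𝕜 : Type*} [RCLike 𝕜] {m n : Type*} [Finite m] [Finite n]

theorem PosSemidef.kronecker_sub_kronecker {A a : Matrix m m 𝕜} {B b : Matrix n n 𝕜}
    (ha : a.PosSemidef) (hb : b.PosSemidef) (hAa : (A - a).PosSemidef)
    (hBb : (B - b).PosSemidef) : (A ⊗ₖ B - a ⊗ₖ b).PosSemidef := by
  have hB : B.PosSemidef := by simpa using hBb.add hb
  have split : A ⊗ₖ B - a ⊗ₖ b = (A - a) ⊗ₖ B + a ⊗ₖ (B - b) := by
    ext ⟨i₁, i₂⟩ ⟨j₁, j₂⟩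
    simp only [sub_apply, add_apply, kronecker_apply]
    ring
  rw [split]
  exact (hAa.kronecker hB).add (ha.kronecker hBb)

end Matrix

theorem hykl_condition_tensor_general {d₁ d₂ ℓ₁ ℓ₂ : ℕ}
    (η₁ : Fin ℓ₁ → ℝ) (η₂ : Fin ℓ₂ → ℝ)
    (ρ₁ : Fin ℓ₁ → Matrix (Fin d₁) (Fin d₁) ℂ)
    (ρ₂ : Fin ℓ₂ → Matrix (Fin d₂) (Fin d₂) ℂ)
    (M₁ : Fin ℓ₁ → Matrix (Fin d₁) (Fin d₁) ℂ)
    (M₂ : Fin ℓ₂ → Matrix (Fin d₂) (Fin d₂) ℂ)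
    (hη₁ : ∀ x, 0 ≤ η₁ x)
    (hη₂ : ∀ y, 0 ≤ η₂ y)
    (hρ₁ : ∀ x, (ρ₁ x).PosSemidef)
    (hρ₂ : ∀ y, (ρ₂ y).PosSemidef)
    (hopt₁ : ∀ x', ((∑ x, η₁ x • (ρ₁ x * M₁ x)) - η₁ x' • ρ₁ x').PosSemidef)
    (hopt₂ : ∀ y', ((∑ y, η₂ y • (ρ₂ y * M₂ y)) - η₂ y' • ρ₂ y').PosSemidef) :
    ∀ x' y',
      ((∑ x, ∑ y, (η₁ x * η₂ y) • ((ρ₁ x ⊗ₖ ρ₂ y) * (M₁ x ⊗ₖ M₂ y)))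
          - (η₁ x' * η₂ y') • (ρ₁ x' ⊗ₖ ρ₂ y')).PosSemidef := by
  intro x' y'
  have product_sum : ∑ x, ∑ y, (η₁ x * η₂ y) • ((ρ₁ x ⊗ₖ ρ₂ y) * (M₁ x ⊗ₖ M₂ y)) =
      (∑ x, η₁ x • (ρ₁ x * M₁ x)) ⊗ₖ (∑ y, η₂ y • (ρ₂ y * M₂ y)) := by
    simp only [sum_kronecker_sum, smul_kronecker, kronecker_smul, mul_kronecker_mul, smul_smul, mul_comm]
  rw [product_sum, mul_smul, ← kronecker_smul, ← smul_kronecker]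
  exact ((hρ₁ x').smul (hη₁ x')).kronecker_sub_kronecker ((hρ₂ y').smul (hη₂ y'))
    (hopt₁ x') (hopt₂ y')

theorem hykl_condition_tensor {d₁ d₂ ℓ₁ ℓ₂ : ℕ}
    (η₁ : Fin ℓ₁ → ℝ) (η₂ : Fin ℓ₂ → ℝ)
    (ρ₁ : Fin ℓ₁ → Matrix (Fin d₁) (Fin d₁) ℂ)
    (ρ₂ : Fin ℓ₂ → Matrix (Fin d₂) (Fin d₂) ℂ)
    (M₁ : Fin ℓ₁ → Matrix (Fin d₁) (Fin d₁) ℂ)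
    (M₂ : Fin ℓ₂ → Matrix (Fin d₂) (Fin d₂) ℂ)
    (hη₁ : ∀ x, 0 ≤ η₁ x) (hη₁s : ∑ x, η₁ x = 1)
    (hη₂ : ∀ y, 0 ≤ η₂ y) (hη₂s : ∑ y, η₂ y = 1)
    (hρ₁ : ∀ x, (ρ₁ x).PosSemidef) (hρ₁t : ∀ x, (ρ₁ x).trace = 1)
    (hρ₂ : ∀ y, (ρ₂ y).PosSemidef) (hρ₂t : ∀ y, (ρ₂ y).trace = 1)
    (hM₁ : ∀ x, (M₁ x).PosSemidef) (hM₁s : ∑ x, M₁ x = 1)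
    (hM₂ : ∀ y, (M₂ y).PosSemidef) (hM₂s : ∑ y, M₂ y = 1)
    (hopt₁ : ∀ x', ((∑ x, η₁ x • (ρ₁ x * M₁ x)) - η₁ x' • ρ₁ x').PosSemidef)
    (hopt₂ : ∀ y', ((∑ y, η₂ y • (ρ₂ y * M₂ y)) - η₂ y' • ρ₂ y').PosSemidef) :
    ∀ x' y',
      ((∑ x, ∑ y, (η₁ x * η₂ y) • ((ρ₁ x ⊗ₖ ρ₂ y) * (M₁ x ⊗ₖ M₂ y)))
          - (η₁ x' * η₂ y') • (ρ₁ x' ⊗ₖ ρ₂ y')).PosSemidef :=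
  hykl_condition_tensor_general η₁ η₂ ρ₁ ρ₂ M₁ M₂ hη₁ hη₂ hρ₁ hρ₂ hopt₁ hopt₂
end

section
/- Let Q = {σ₁, …, σ_N} be density operators on a finite-dimensional Hilbert space and suppose the pair (k = 2) of ensembles S¹ = {ρ¹_j}_{j∈[ℓ₁]}, S² = {ρ²_j}_{j∈[ℓ₂]} each satisfy the unambiguous-discriminability condition: for every j, supp(Sⁱ) ≠ supp(Sⁱ \ {ρⁱ_j}). Then the product set {ρ¹_{x₁} ⊗ ρ²_{x₂} : x₁ ∈ [ℓ₁], x₂ ∈ [ℓ₂]} also satisfies the condition: for every (y₁, y₂), the support of the full product set strictly contains the support of the product set with ρ¹_{y₁} ⊗ ρ²_{y₂} removed. -/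
open Matrix Kronecker ComplexOrder

/-- The support of a finite family of operators: the sum of their ranges. -/
noncomputable def suppFam {d ℓ : ℕ} (ρ : Fin ℓ → Matrix (Fin d) (Fin d) ℂ) :
    Submodule ℂ (Fin d → ℂ) :=
  ⨆ j, LinearMap.range (ρ j).mulVecLin

private def tvec {d₁ d₂ : ℕ} (v : Fin d₁ → ℂ) (w : Fin d₂ → ℂ) : Fin d₁ × Fin d₂ → ℂ :=
  fun p => v p.1 * w p.2

private lemma kron_mulVec_tvec {d₁ d₂ : ℕ} (A : Matrix (Fin d₁) (Fin d₁) ℂ)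
    (B : Matrix (Fin d₂) (Fin d₂) ℂ) (x : Fin d₁ → ℂ) (u : Fin d₂ → ℂ) :
    (A ⊗ₖ B) *ᵥ tvec x u = tvec (A *ᵥ x) (B *ᵥ u) := by
  funext p
  obtain ⟨i, j⟩ := p
  simp only [tvec, mulVec, dotProduct, Fintype.sum_prod_type, kroneckerMap_apply]
  rw [Finset.sum_mul_sum]
  exact Finset.sum_congr rfl fun a _ => Finset.sum_congr rfl fun b _ => by ring

private def rowApply {d₁ d₂ : ℕ} (g : (Fin d₂ → ℂ) →ₗ[ℂ] ℂ) :
    ((Fin d₁ × Fin d₂) → ℂ) →ₗ[ℂ] (Fin d₁ → ℂ) where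
  toFun z := fun i => g (fun j => z (i, j))
  map_add' z w := by
    funext i
    show g (fun j => z (i,j) + w (i,j)) = g (fun j => z (i,j)) + g (fun j => w (i,j))
    rw [← map_add]; rfl
  map_smul' c z := by
    funext i
    show g (fun j => c * z (i,j)) = c * g (fun j => z (i,j))
    rw [show (fun j => c * z (i,j)) = c • (fun j => z (i,j)) from rfl, _root_.map_smul]
    rfl

private lemma phi_tvec {d₁ d₂ : ℕ} (f : (Fin d₁ → ℂ) →ₗ[ℂ] ℂ) (g : (Fin d₂ → ℂ) →ₗ[ℂ] ℂ)
    (v : Fin d₁ → ℂ) (w : Fin d₂ → ℂ) :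
    (f.comp (rowApply g)) (tvec v w) = g w * f v := by
  have h1 : rowApply (d₁ := d₁) g (tvec v w) = g w • v := by
    funext i
    show g (fun j => v i * w j) = (g w • v) i
    have : (fun j => v i * w j) = v i • w := by funext j; simp [smul_eq_mul]
    rw [this, _root_.map_smul]
    simp [smul_eq_mul, mul_comm]
  rw [LinearMap.comp_apply, h1, _root_.map_smul, smul_eq_mul]

private lemma phi_vanish {d₁ d₂ : ℕ} (f : (Fin d₁ → ℂ) →ₗ[ℂ] ℂ) (g : (Fin d₂ → ℂ) →ₗ[ℂ] ℂ)
    (A : Matrix (Fin d₁) (Fin d₁) ℂ) (B : Matrix (Fin d₂) (Fin d₂) ℂ)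
    (h : (∀ x, f (A *ᵥ x) = 0) ∨ (∀ x, g (B *ᵥ x) = 0)) (u : Fin d₁ × Fin d₂ → ℂ) :
    (f.comp (rowApply g)) ((A ⊗ₖ B) *ᵥ u) = 0 := by
  have hu : (A ⊗ₖ B) *ᵥ u = ∑ p : Fin d₁ × Fin d₂, (A ⊗ₖ B).mulVecLin (Pi.single p (u p)) := by
    rw [← map_sum, Finset.univ_sum_single u, mulVecLin_apply]
  rw [hu, map_sum]
  apply Finset.sum_eq_zero
  rintro ⟨a, b⟩ -
  have hsingle : (Pi.single (a, b) (u (a, b)) : Fin d₁ × Fin d₂ → ℂ)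
      = tvec (Pi.single a (u (a, b))) (Pi.single b 1) := by
    funext q
    obtain ⟨i, j⟩ := q
    simp only [tvec, Pi.single_apply, Prod.mk.injEq]
    by_cases hi : i = a <;> by_cases hj : j = b <;> simp [hi, hj, Prod.ext_iff]
  rw [mulVecLin_apply, hsingle, kron_mulVec_tvec, phi_tvec]
  rcases h with h | h
  · rw [h]; ring
  · rw [h]; ring

private lemma exists_dual {V : Type*} [AddCommGroup V] [Module ℂ V]
    (p : Submodule ℂ V) (b : V) (hb : b ∉ p) :
    ∃ f : V →ₗ[ℂ] ℂ, (∀ x ∈ p, f x = 0) ∧ f b ≠ 0 := by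
  have hb' : p.mkQ b ≠ 0 := by
    simpa [Submodule.mkQ_apply, Submodule.Quotient.mk_eq_zero] using hb
  obtain ⟨φ, hφ⟩ : ∃ φ : Module.Dual ℂ (V ⧸ p), φ (p.mkQ b) ≠ 0 := by
    by_contra h
    push_neg at h
    exact hb' ((Module.forall_dual_apply_eq_zero_iff ℂ _).mp h)
  refine ⟨φ.comp p.mkQ, fun x hx => ?_, hφ⟩
  simp [Submodule.mkQ_apply, (Submodule.Quotient.mk_eq_zero p).mpr hx]

private lemma exists_mem_notMem {M : Type*} [AddCommGroup M] [Module ℂ M] {ℓ : ℕ}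
    (f : Fin ℓ → Submodule ℂ M) (y : Fin ℓ)
    (h : (⨆ j, f j) ≠ ⨆ j : {j : Fin ℓ // j ≠ y}, f j.1) :
    ∃ v ∈ f y, v ∉ ⨆ j : {j : Fin ℓ // j ≠ y}, f j.1 := by
  set P := ⨆ j : {j : Fin ℓ // j ≠ y}, f j.1 with hP
  have hsplit : (⨆ j, f j) = f y ⊔ P := by
    rw [iSup_split_single f y, hP, iSup_subtype]
  have hnle : ¬ f y ≤ P := fun hle => h (by rw [hsplit, sup_eq_right.mpr hle])
  exact SetLike.not_le_iff_exists.mp hnle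

theorem product_unambiguous_condition {d₁ d₂ ℓ₁ ℓ₂ : ℕ}
    (ρ₁ : Fin ℓ₁ → Matrix (Fin d₁) (Fin d₁) ℂ)
    (ρ₂ : Fin ℓ₂ → Matrix (Fin d₂) (Fin d₂) ℂ)
    (hρ₁ : ∀ j, (ρ₁ j).PosSemidef) (hρ₁t : ∀ j, (ρ₁ j).trace = 1)
    (hρ₂ : ∀ j, (ρ₂ j).PosSemidef) (hρ₂t : ∀ j, (ρ₂ j).trace = 1)
    (h₁ : ∀ y : Fin ℓ₁,
      suppFam ρ₁ ≠ ⨆ j : {j : Fin ℓ₁ // j ≠ y}, LinearMap.range (ρ₁ j.1).mulVecLin)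
    (h₂ : ∀ y : Fin ℓ₂,
      suppFam ρ₂ ≠ ⨆ j : {j : Fin ℓ₂ // j ≠ y}, LinearMap.range (ρ₂ j.1).mulVecLin) :
    ∀ y₁ : Fin ℓ₁, ∀ y₂ : Fin ℓ₂,
      (⨆ p : {p : Fin ℓ₁ × Fin ℓ₂ // p ≠ (y₁, y₂)},
          LinearMap.range ((ρ₁ p.1.1 ⊗ₖ ρ₂ p.1.2)).mulVecLin)
        < ⨆ p : Fin ℓ₁ × Fin ℓ₂, LinearMap.range ((ρ₁ p.1 ⊗ₖ ρ₂ p.2)).mulVecLin := by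
  intro y₁ y₂
  obtain ⟨v, hv, hvP⟩ := exists_mem_notMem (fun j => LinearMap.range (ρ₁ j).mulVecLin) y₁ (h₁ y₁)
  obtain ⟨w, hw, hwP⟩ := exists_mem_notMem (fun j => LinearMap.range (ρ₂ j).mulVecLin) y₂ (h₂ y₂)
  obtain ⟨f, hf0, hfv⟩ := exists_dual _ v hvP
  obtain ⟨g, hg0, hgw⟩ := exists_dual _ w hwP
  set φ := f.comp (rowApply (d₁ := d₁) g) with hφ
  -- φ vanishes on the punctured product sup
  have hker : (⨆ p : {p : Fin ℓ₁ × Fin ℓ₂ // p ≠ (y₁, y₂)},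
      LinearMap.range ((ρ₁ p.1.1 ⊗ₖ ρ₂ p.1.2)).mulVecLin) ≤ LinearMap.ker φ := by
    apply iSup_le
    rintro ⟨⟨a, b⟩, hab⟩
    rintro z ⟨u, rfl⟩
    rw [LinearMap.mem_ker, mulVecLin_apply]
    apply phi_vanish
    have hcases : a ≠ y₁ ∨ b ≠ y₂ := by
      by_contra hc
      push_neg at hc
      exact hab (by simp [hc.1, hc.2])
    rcases hcases with ha | hb
    · left
      intro x
      apply hf0
      exact le_iSup (fun j : {j : Fin ℓ₁ // j ≠ y₁} => LinearMap.range (ρ₁ j.1).mulVecLin)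
        ⟨a, ha⟩ ⟨x, by rw [mulVecLin_apply]⟩
    · right
      intro x
      apply hg0
      exact le_iSup (fun j : {j : Fin ℓ₂ // j ≠ y₂} => LinearMap.range (ρ₂ j.1).mulVecLin)
        ⟨b, hb⟩ ⟨x, by rw [mulVecLin_apply]⟩
  rw [SetLike.lt_iff_le_and_exists]
  constructor
  · exact iSup_le fun p =>
      le_iSup (fun p : Fin ℓ₁ × Fin ℓ₂ => LinearMap.range ((ρ₁ p.1 ⊗ₖ ρ₂ p.2)).mulVecLin) p.1
  · refine ⟨tvec v w, ?_, ?_⟩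
    · obtain ⟨x, hx⟩ := hv
      obtain ⟨u, hu⟩ := hw
      refine le_iSup (fun p : Fin ℓ₁ × Fin ℓ₂ => LinearMap.range ((ρ₁ p.1 ⊗ₖ ρ₂ p.2)).mulVecLin)
        (y₁, y₂) ⟨tvec x u, ?_⟩
      rw [mulVecLin_apply, kron_mulVec_tvec]
      rw [mulVecLin_apply] at hx hu
      rw [hx, hu]
    · intro hmem
      have : φ (tvec v w) = 0 := hker hmem
      rw [hφ, phi_tvec] at this
      exact mul_ne_zero hgw hfv this
end
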